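/- Every solution (B, P) of the static MHD equilibrium system curl B × B = grad P, div B = 0 yields, for any smooth Ψ with B·grad Ψ = 0, any nowhere-zero smooth M, and τ(x) := 1 - M(Ψ(x))⁻², a solution of the static CGL system via B₁ = (M∘Ψ)•B, p⊥₁ = P + (‖B‖² - ‖B₁‖²)/2, τ₁ = τ. -/

import Mathlib

open Real

noncomputable def pd (i : Fin 3) (f : (Fin 3 → ℝ) → ℝ) (x : Fin 3 → ℝ) : ℝ :=
  fderiv ℝ f x (Pi.single i 1)

noncomputable def grad (f : (Fin 3 → ℝ) → ℝ) (x : Fin 3 → ℝ) : Fin 3 → ℝ :=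
  fun i => pd i f x

noncomputable def vdiv (F : (Fin 3 → ℝ) → Fin 3 → ℝ) (x : Fin 3 → ℝ) : ℝ :=
  pd 0 (fun y => F y 0) x + pd 1 (fun y => F y 1) x + pd 2 (fun y => F y 2) x

noncomputable def curl (F : (Fin 3 → ℝ) → Fin 3 → ℝ) (x : Fin 3 → ℝ) : Fin 3 → ℝ :=
  ![pd 1 (fun y => F y 2) x - pd 2 (fun y => F y 1) x,
    pd 2 (fun y => F y 0) x - pd 0 (fun y => F y 2) x,
    pd 0 (fun y => F y 1) x - pd 1 (fun y => F y 0) x]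

def cross (u v : Fin 3 → ℝ) : Fin 3 → ℝ :=
  ![u 1 * v 2 - u 2 * v 1, u 2 * v 0 - u 0 * v 2, u 0 * v 1 - u 1 * v 0]

def dot (u v : Fin 3 → ℝ) : ℝ := u 0 * v 0 + u 1 * v 1 + u 2 * v 2

/-- The static anisotropic (CGL) plasma equilibrium system with equation of state
`B · grad τ = 0`. -/
noncomputable def CGL (B : (Fin 3 → ℝ) → Fin 3 → ℝ) (pperp τ : (Fin 3 → ℝ) → ℝ) : Prop :=
  (∀ x, (1 - τ x) • cross (curl B x) (B x) =
      grad pperp x + τ x • grad (fun y => dot (B y) (B y) / 2) x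
        + dot (B x) (grad τ x) • B x) ∧
  (∀ x, vdiv B x = 0) ∧
  (∀ x, dot (B x) (grad τ x) = 0)

section aux
variable {f g : (Fin 3 → ℝ) → ℝ} {x : Fin 3 → ℝ} {i : Fin 3} {c : ℝ}

theorem pd_add (hf : DifferentiableAt ℝ f x) (hg : DifferentiableAt ℝ g x) :
    pd i (fun y => f y + g y) x = pd i f x + pd i g x := by
  simp [pd, fderiv_fun_add hf hg]

theorem pd_sub (hf : DifferentiableAt ℝ f x) (hg : DifferentiableAt ℝ g x) :
    pd i (fun y => f y - g y) x = pd i f x - pd i g x := by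
  simp [pd, fderiv_fun_sub hf hg]

theorem pd_mul (hf : DifferentiableAt ℝ f x) (hg : DifferentiableAt ℝ g x) :
    pd i (fun y => f y * g y) x = pd i f x * g x + f x * pd i g x := by
  simp [pd, fderiv_fun_mul hf hg]; ring

theorem pd_div_const (hf : DifferentiableAt ℝ f x) :
    pd i (fun y => f y / c) x = pd i f x / c := by
  simp only [pd, div_eq_mul_inv, fderiv_mul_const hf]
  simp [mul_comm]

theorem pd_const : pd i (fun _ => c) x = 0 := by
  simp [pd]

theorem pd_comp (F : ℝ → ℝ) (hF : DifferentiableAt ℝ F (f x)) (hf : DifferentiableAt ℝ f x) :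
    pd i (fun y => F (f y)) x = deriv F (f x) * pd i f x := by
  unfold pd
  rw [show (fun y => F (f y)) = F ∘ f from rfl, fderiv_comp x hF hf]
  simp only [ContinuousLinearMap.coe_comp', Function.comp_apply]
  rw [show fderiv ℝ f x (Pi.single i 1) = (fderiv ℝ f x (Pi.single i 1)) • (1:ℝ) by simp,
    map_smul, fderiv_apply_one_eq_deriv]
  simp [mul_comm]
end aux

/-- every static MHD equilibrium generates, via the infinite symmetry,
a family of static CGL equilibria. -/
theorem mhd_generates_cgl (B : (Fin 3 → ℝ) → Fin 3 → ℝ)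
    (P Ψ : (Fin 3 → ℝ) → ℝ) (M : ℝ → ℝ)
    (hB : ContDiff ℝ (⊤ : ℕ∞) B) (hP : ContDiff ℝ (⊤ : ℕ∞) P)
    (hΨ : ContDiff ℝ (⊤ : ℕ∞) Ψ) (hM : ContDiff ℝ (⊤ : ℕ∞) M)
    (hM0 : ∀ s, M s ≠ 0)
    (heq : ∀ x, cross (curl B x) (B x) = grad P x)
    (hdiv : ∀ x, vdiv B x = 0)
    (hΨline : ∀ x, dot (B x) (grad Ψ x) = 0) :
    CGL (fun x => M (Ψ x) • B x)
      (fun x => P x + (dot (B x) (B x) - dot (M (Ψ x) • B x) (M (Ψ x) • B x)) / 2)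
      (fun x => 1 - ((M (Ψ x))⁻¹) ^ 2) := by
  have hMd := hM.differentiable (by simp)
  have hΨd := hΨ.differentiable (by simp)
  have hPd := hP.differentiable (by simp)
  have hB0 : Differentiable ℝ (fun y => B y 0) := ((contDiff_pi.mp hB) 0).differentiable (by simp)
  have hB1 : Differentiable ℝ (fun y => B y 1) := ((contDiff_pi.mp hB) 1).differentiable (by simp)
  have hB2 : Differentiable ℝ (fun y => B y 2) := ((contDiff_pi.mp hB) 2).differentiable (by simp)
  refine ⟨?_, ?_, ?_⟩ <;> intro x
  · have hm : ∀ i : Fin 3, pd i (fun y => M (Ψ y)) x = deriv M (Ψ x) * pd i Ψ x :=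
      fun i => pd_comp M (hMd _) (hΨd _)
    have hτ : ∀ i : Fin 3, pd i (fun y => 1 - (M (Ψ y))⁻¹ ^ 2) x
        = deriv (fun s => 1 - (M s)⁻¹ ^ 2) (Ψ x) * pd i Ψ x :=
      fun i => pd_comp (fun s => 1 - (M s)⁻¹ ^ 2)
        ((contDiff_const.sub ((hM.inv hM0).pow 2)).differentiable (by simp) _) (hΨd _)
    have hl := hΨline x
    have hqr : M (Ψ x) * (M (Ψ x))⁻¹ = 1 := mul_inv_cancel₀ (hM0 _)
    have e0 := congrFun (heq x) 0
    have e1 := congrFun (heq x) 1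
    have e2 := congrFun (heq x) 2
    funext i
    fin_cases i <;>
      (simp only [show (⟨0, by omega⟩ : Fin 3) = 0 from rfl, show (⟨1, by omega⟩ : Fin 3) = 1 from rfl,
        show (⟨2, by omega⟩ : Fin 3) = 2 from rfl, cross, curl, grad, dot, Pi.add_apply,
        Pi.smul_apply, smul_eq_mul,
        Matrix.cons_val_zero, Matrix.cons_val_one, Matrix.head_cons, Matrix.cons_val_two,
        Matrix.tail_cons] at e0 e1 e2 hl ⊢;
       simp (disch := fun_prop (disch := apply hM0)) only [hτ, pd_add, pd_sub, pd_mul,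
        pd_div_const, pd_const, hm])
    · linear_combination ((M (Ψ x))⁻¹ ^ 2 * M (Ψ x) ^ 2) * e0 + ((M (Ψ x))⁻¹ ^ 2 * M (Ψ x) * deriv M (Ψ x) - M (Ψ x) ^ 2 * deriv (fun s => 1 - (M s)⁻¹ ^ 2) (Ψ x)) * B x 0 * hl + (M (Ψ x) * (M (Ψ x))⁻¹ + 1) * (pd 0 P x + (B x 0 * pd 0 (fun y => B y 0) x + B x 1 * pd 0 (fun y => B y 1) x + B x 2 * pd 0 (fun y => B y 2) x)) * hqr
    · linear_combination ((M (Ψ x))⁻¹ ^ 2 * M (Ψ x) ^ 2) * e1 + ((M (Ψ x))⁻¹ ^ 2 * M (Ψ x) * deriv M (Ψ x) - M (Ψ x) ^ 2 * deriv (fun s => 1 - (M s)⁻¹ ^ 2) (Ψ x)) * B x 1 * hl + (M (Ψ x) * (M (Ψ x))⁻¹ + 1) * (pd 1 P x + (B x 0 * pd 1 (fun y => B y 0) x + B x 1 * pd 1 (fun y => B y 1) x + B x 2 * pd 1 (fun y => B y 2) x)) * hqr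
    · linear_combination ((M (Ψ x))⁻¹ ^ 2 * M (Ψ x) ^ 2) * e2 + ((M (Ψ x))⁻¹ ^ 2 * M (Ψ x) * deriv M (Ψ x) - M (Ψ x) ^ 2 * deriv (fun s => 1 - (M s)⁻¹ ^ 2) (Ψ x)) * B x 2 * hl + (M (Ψ x) * (M (Ψ x))⁻¹ + 1) * (pd 2 P x + (B x 0 * pd 2 (fun y => B y 0) x + B x 1 * pd 2 (fun y => B y 1) x + B x 2 * pd 2 (fun y => B y 2) x)) * hqr
  · have hm : ∀ i : Fin 3, pd i (fun y => M (Ψ y)) x = deriv M (Ψ x) * pd i Ψ x :=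
      fun i => pd_comp M (hMd _) (hΨd _)
    have hτ : ∀ i : Fin 3, pd i (fun y => 1 - (M (Ψ y))⁻¹ ^ 2) x
        = deriv (fun s => 1 - (M s)⁻¹ ^ 2) (Ψ x) * pd i Ψ x :=
      fun i => pd_comp (fun s => 1 - (M s)⁻¹ ^ 2)
        ((contDiff_const.sub ((hM.inv hM0).pow 2)).differentiable (by simp) _) (hΨd _)
    have hl := hΨline x
    have hqr : M (Ψ x) * (M (Ψ x))⁻¹ = 1 := mul_inv_cancel₀ (hM0 _)
    have hd := hdiv x
    simp only [vdiv, dot, grad] at hd hl ⊢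
    simp (disch := fun_prop (disch := apply hM0)) only [Pi.smul_apply, smul_eq_mul,
      pd_add, pd_sub, pd_mul, pd_div_const, pd_const, hm]
    linear_combination deriv M (Ψ x) * hl + M (Ψ x) * hd
  · have hm : ∀ i : Fin 3, pd i (fun y => M (Ψ y)) x = deriv M (Ψ x) * pd i Ψ x :=
      fun i => pd_comp M (hMd _) (hΨd _)
    have hτ : ∀ i : Fin 3, pd i (fun y => 1 - (M (Ψ y))⁻¹ ^ 2) x
        = deriv (fun s => 1 - (M s)⁻¹ ^ 2) (Ψ x) * pd i Ψ x :=
      fun i => pd_comp (fun s => 1 - (M s)⁻¹ ^ 2)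
        ((contDiff_const.sub ((hM.inv hM0).pow 2)).differentiable (by simp) _) (hΨd _)
    have hl := hΨline x
    have hqr : M (Ψ x) * (M (Ψ x))⁻¹ = 1 := mul_inv_cancel₀ (hM0 _)
    simp only [dot, grad, Pi.smul_apply, smul_eq_mul] at hl ⊢
    simp (disch := fun_prop (disch := apply hM0)) only [hτ, pd_add, pd_sub, pd_mul,
      pd_div_const, pd_const, hm]
    linear_combination M (Ψ x) * deriv (fun s => 1 - (M s)⁻¹ ^ 2) (Ψ x) * hl
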